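/- arXiv:1705.04648 — 5 statements merged into one kernel-verified Lean document; each statement's English description precedes it below -/
import Mathlib

section
/- Let b ≤ -2. If a > (|b|-1)(|b|^2 - |b| + 1), then 0 < S_{2,b}(a) < a. -/
/-- The value of a digit list `L = [a₀, a₁, …, aₙ]` in base `b`: `Σ aᵢ bⁱ`. -/
def baseVal (b : ℤ) : List ℤ → ℤ
  | [] => 0
  | d :: L => d + b * baseVal b L

/-- `L` is the base-`b` digit expansion of `a`: digits in `[0, |b|-1]`,
leading (last) digit nonzero, with value `a`. -/
def IsDigitExpansion (b a : ℤ) (L : List ℤ) : Prop :=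
  (∀ d ∈ L, 0 ≤ d ∧ d ≤ |b| - 1) ∧ L ≠ [] ∧ L.getLast! ≠ 0 ∧ baseVal b L = a

/-- `S` is the function `S_{e,b}` sending `a` to the sum of `e`-th powers of its
base-`b` digits (and `0` to `0`). -/
def IsPowSumFun (e : ℕ) (b : ℤ) (S : ℤ → ℤ) : Prop :=
  S 0 = 0 ∧ ∀ a L, IsDigitExpansion b a L → S a = (L.map (· ^ e)).sum


/-!
Write `B = -b`. For any list of digits in `[0, B)` with value `v`, prepending a digit flips
the sign of the tail's contribution, so an induction on the list proves two bounds at once: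
`S ≤ (B - 1) v` when `v ≥ 0`, and `S ≤ B (B - 1) (-v)` when `v ≤ 0`.
For `a > 0`, splitting off the two lowest digits gives `a = d₀ - B d₁ + B² q` and
`S(a) = d₀² + d₁² + S(q)`. The hypothesis on `a` forces `q ≥ B - 1`, and `d₁ ≤ B - 2`
when `q = B - 1`; in both cases the bound `S(q) ≤ (B - 1) q` then gives `S(a) < a`.
-/

def IsNegabaseDigits (b : ℤ) (L : List ℤ) : Prop := ∀ d ∈ L, 0 ≤ d ∧ d < -b

def sqSum (L : List ℤ) : ℤ := (L.map (· ^ 2)).sum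

section

variable {b : ℤ}

@[simp]
lemma isNegabaseDigits_nil : IsNegabaseDigits b [] := by
  simp [IsNegabaseDigits]

@[simp]
lemma isNegabaseDigits_cons {d : ℤ} {L : List ℤ} :
    IsNegabaseDigits b (d :: L) ↔ (0 ≤ d ∧ d < -b) ∧ IsNegabaseDigits b L := by
  simp [IsNegabaseDigits]

@[simp]
lemma sqSum_nil : sqSum [] = 0 := rfl

@[simp]
lemma sqSum_cons (d : ℤ) (L : List ℤ) : sqSum (d :: L) = d ^ 2 + sqSum L := by
  simp [sqSum]

lemma sqSum_nonneg (L : List ℤ) : 0 ≤ sqSum L :=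
  List.sum_nonneg (by simp [sq_nonneg])

lemma sqSum_pos {L : List ℤ} (hL : baseVal b L ≠ 0) : 0 < sqSum L := by
  induction L with
  | nil => exact absurd rfl hL
  | cons d T ih =>
    rw [sqSum_cons]
    by_cases hd : d = 0
    · subst hd
      have hT : baseVal b T ≠ 0 := fun h => hL (by simp [baseVal, h])
      nlinarith [ih hT]
    · nlinarith [sqSum_nonneg T, pow_pos (abs_pos.2 hd) 2, sq_abs d]

/-- Adding or subtracting `1` only changes the lowest digit, except for a carry of `∓1`
into the next position, since `-b = 0 + b * (-1)` and `-1 = (-b - 1) + b * 1`. -/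
lemma exists_baseVal_add_one_and_sub_one (hb : b ≤ -2) {L : List ℤ}
    (hL : IsNegabaseDigits b L) :
    (∃ L', IsNegabaseDigits b L' ∧ baseVal b L' = baseVal b L + 1) ∧
      ∃ L', IsNegabaseDigits b L' ∧ baseVal b L' = baseVal b L - 1 := by
  induction L with
  | nil =>
    exact ⟨⟨[1], by simp; omega, by simp [baseVal]⟩,
      ⟨[-b - 1, 1], by simp; omega, by simp only [baseVal]; ring⟩⟩
  | cons d T ih =>
    obtain ⟨⟨hd0, hdb⟩, hT⟩ := isNegabaseDigits_cons.1 hL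
    obtain ⟨⟨Tsucc, hTsucc, hvsucc⟩, ⟨Tpred, hTpred, hvpred⟩⟩ := ih hT
    constructor
    · by_cases hcarry : d = -b - 1
      · refine ⟨0 :: Tpred, by simp [hTpred]; omega, ?_⟩
        simp only [baseVal, hvpred]
        subst hcarry
        ring
      · exact ⟨(d + 1) :: T, by simp [hT]; omega, by simp only [baseVal]; ring⟩
    · by_cases hborrow : d = 0
      · refine ⟨(-b - 1) :: Tsucc, by simp [hTsucc]; omega, ?_⟩
        simp only [baseVal, hvsucc]
        subst hborrow
        ring
      · exact ⟨(d - 1) :: T, by simp [hT]; omega, by simp only [baseVal]; ring⟩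

lemma exists_isNegabaseDigits_baseVal_eq (hb : b ≤ -2) (a : ℤ) :
    ∃ L, IsNegabaseDigits b L ∧ baseVal b L = a := by
  induction a using Int.induction_on with
  | zero => exact ⟨[], isNegabaseDigits_nil, rfl⟩
  | succ n ih =>
    obtain ⟨L, hL, hv⟩ := ih
    rw [← hv]
    exact (exists_baseVal_add_one_and_sub_one hb hL).1
  | pred n ih =>
    obtain ⟨L, hL, hv⟩ := ih
    rw [← hv]
    exact (exists_baseVal_add_one_and_sub_one hb hL).2

lemma exists_getLast!_ne_zero {L : List ℤ} (hL : IsNegabaseDigits b L)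
    (hv : baseVal b L ≠ 0) :
    ∃ L', IsNegabaseDigits b L' ∧ L' ≠ [] ∧ L'.getLast! ≠ 0 ∧
      baseVal b L' = baseVal b L := by
  induction L with
  | nil => exact absurd rfl hv
  | cons d T ih =>
    obtain ⟨hd, hT⟩ := isNegabaseDigits_cons.1 hL
    by_cases hT0 : baseVal b T = 0
    · refine ⟨[d], by simp [hd], by simp, ?_, by simp [baseVal, hT0]⟩
      simpa [baseVal, hT0] using hv
    · obtain ⟨T', hT', hne, hlast, hval⟩ := ih hT hT0
      obtain ⟨c, cs, rfl⟩ := List.exists_cons_of_ne_nil hne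
      refine ⟨d :: c :: cs, by simp_all, by simp, ?_, congrArg (d + b * ·) hval⟩
      simpa [List.getLast!_cons_eq_getLastD] using hlast

lemma exists_isDigitExpansion (hb : b ≤ -2) {a : ℤ} (ha : a ≠ 0) :
    ∃ L, IsDigitExpansion b a L := by
  obtain ⟨L, hL, rfl⟩ := exists_isNegabaseDigits_baseVal_eq hb a
  obtain ⟨L', hL', hne, hlast, hval⟩ := exists_getLast!_ne_zero hL ha
  refine ⟨L', fun d hd => ?_, hne, hlast, hval⟩
  have := hL' d hd
  rw [abs_of_neg (by omega : b < 0)]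
  omega

lemma isNegabaseDigits_of_isDigitExpansion (hb : b < 0) {a : ℤ} {L : List ℤ}
    (hL : IsDigitExpansion b a L) : IsNegabaseDigits b L := fun d hd => by
  have := hL.1 d hd
  rw [abs_of_neg hb] at this
  omega

lemma sqSum_le_of_isNegabaseDigits (hb : b < 0) {L : List ℤ} (hL : IsNegabaseDigits b L) :
    (0 ≤ baseVal b L → sqSum L ≤ (-b - 1) * baseVal b L) ∧
      (baseVal b L ≤ 0 → sqSum L ≤ b * (b + 1) * -baseVal b L) := by
  induction L with
  | nil => simp [baseVal]
  | cons d T ih =>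
    obtain ⟨⟨hd0, hdb⟩, hT⟩ := isNegabaseDigits_cons.1 hL
    obtain ⟨ihnonneg, ihnonpos⟩ := ih hT
    simp only [baseVal, sqSum_cons]
    set w := baseVal b T
    have hdsq : d ^ 2 ≤ (-b - 1) * d := by nlinarith
    constructor
    · intro hv
      have hw : w ≤ 0 := by nlinarith
      nlinarith [ihnonpos hw]
    · intro hv
      have hw : 0 ≤ w := by nlinarith
      have hdw : d ≤ (-b - 1) * w := by
        rcases hw.eq_or_lt with hw0 | hwpos <;> nlinarith
      nlinarith [ihnonneg hw, mul_nonneg (show 0 ≤ -b - 1 by omega)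
        (mul_nonneg (show 0 ≤ 1 - b by omega) (sub_nonneg.2 hdw))]

lemma sqSum_lt_baseVal (hb : b ≤ -2) {L : List ℤ} (hL : IsNegabaseDigits b L)
    (hv : (-b - 1) * (b ^ 2 + b + 1) < baseVal b L) : sqSum L < baseVal b L := by
  have hthreshold : -b - 1 ≤ (-b - 1) * (b ^ 2 + b + 1) := by nlinarith
  match L, hL, hv with
  | [], _, hv => simp only [baseVal] at hv; omega
  | [d], hL, hv =>
    simp only [isNegabaseDigits_cons, baseVal] at hL hv
    omega
  | d₀ :: d₁ :: T, hL, hv =>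
    simp only [isNegabaseDigits_cons] at hL
    obtain ⟨⟨hd₀, hd₀b⟩, ⟨hd₁, hd₁b⟩, hT⟩ := hL
    simp only [baseVal, sqSum_cons] at hv ⊢
    set q := baseVal b T
    have hq : -b - 1 ≤ q := by nlinarith
    have hsq : sqSum T ≤ (-b - 1) * q :=
      (sqSum_le_of_isNegabaseDigits (by omega) hT).1 (by omega)
    have hd₀sq : d₀ ^ 2 - d₀ ≤ (-b - 2) * (-b - 1) := by
      nlinarith [mul_nonneg (show 0 ≤ -b - 2 by omega) (show 0 ≤ -b - 1 - d₀ by omega)]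
    rcases hq.eq_or_lt with hq | hq
    · have hd₁' : d₁ ≤ -b - 2 := by nlinarith
      have hd₁sq : d₁ ^ 2 - b * d₁ ≤ (-b - 2) * (-2 * b - 2) := by
        nlinarith [mul_nonneg (show 0 ≤ -b - 2 - d₁ by omega)
          (show 0 ≤ d₁ - 2 * b - 2 by omega)]
      rw [← hq] at hsq ⊢
      nlinarith [mul_pos (show 0 < -b - 1 by omega) (show 0 < (b + 2) ^ 2 + 3 by positivity)]
    · have hd₁sq : d₁ ^ 2 - b * d₁ ≤ (-b - 1) * (-2 * b - 1) := by
        nlinarith [mul_nonneg (show 0 ≤ -b - 1 - d₁ by omega)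
          (show 0 ≤ d₁ - 2 * b - 1 by omega)]
      nlinarith [mul_nonneg (show 0 ≤ b ^ 2 + b + 1 by nlinarith) (show 0 ≤ q + b by omega),
        mul_nonneg (show 0 ≤ -b - 2 by omega) (show 0 ≤ b ^ 2 + 2 * b + 3 by nlinarith)]

end

theorem gets_smaller (b : ℤ) (hb : b ≤ -2) (S : ℤ → ℤ) (hS : IsPowSumFun 2 b S)
    (a : ℤ) (ha : (|b| - 1) * (|b| ^ 2 - |b| + 1) < a) :
    0 < S a ∧ S a < a := by
  have habs : |b| = -b := abs_of_neg (by omega)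
  rw [habs] at ha
  have hthreshold : (-b - 1) * (b ^ 2 + b + 1) < a := by linarith
  have ha0 : a ≠ 0 := by nlinarith
  obtain ⟨L, hL⟩ := exists_isDigitExpansion hb ha0
  have hdigits := isNegabaseDigits_of_isDigitExpansion (by omega) hL
  rw [hS.2 a L hL]
  obtain ⟨-, -, -, rfl⟩ := hL
  exact ⟨sqSum_pos ha0, sqSum_lt_baseVal hb hdigits hthreshold⟩
end

section
/- The fixed points of S_{2,-2} on the positive integers are exactly 1, 2, and 3, and S_{2,-2} has no cycles of length greater than 1 among positive integers. -/
/-!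
In base `-2` every digit is `0` or `1`, so `S a` is at most the number of digits of `a`. A positive
integer has an odd number `2m + 1` of digits in base `-2`, and then `3a ≥ 4^m + 2`; this exceeds
`3(2m + 1)` as soon as `a ≥ 4`, so `S a < a` for `a ≥ 4`, while `1, 2, 3` (digits `1`, `011`, `111`,
least significant first) are fixed. Hence `S` maps `[0, ∞)` into itself and `S a ≤ a` there, so
the values along a cycle can only decrease and every periodic point is fixed.
-/

theorem baseVal_append_singleton (b : ℤ) (L : List ℤ) (x : ℤ) :
    baseVal b (L ++ [x]) = baseVal b L + x * b ^ L.length := by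
  induction L with
  | nil => simp [baseVal]
  | cons d L ih => simp only [List.cons_append, baseVal, ih, List.length_cons]; ring

theorem baseVal_neg_two_bounds {L : List ℤ} (hL : ∀ d ∈ L, d = 0 ∨ d = 1) :
    2 - 2 ^ (L.length + 1) ≤ 3 * baseVal (-2) L ∧ 3 * baseVal (-2) L ≤ 2 ^ (L.length + 1) - 1 := by
  induction L with
  | nil => simp [baseVal]
  | cons d L ih =>
    obtain ⟨hd, hL⟩ := List.forall_mem_cons.1 hL
    obtain ⟨lo, hi⟩ := ih hL
    simp only [baseVal, List.length_cons, pow_succ] at lo hi ⊢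
    rcases hd with rfl | rfl <;> constructor <;> linarith

namespace IsDigitExpansion

variable {a : ℤ} {L : List ℤ}

theorem singleton {b d : ℤ} (hd : 0 < d) (hdb : d < |b|) : IsDigitExpansion b d [d] :=
  ⟨by simpa using ⟨hd.le, hdb⟩, List.cons_ne_nil _ _, by simpa using hd.ne', by simp [baseVal]⟩

theorem cons {b q d : ℤ} (hL : IsDigitExpansion b q L) (hd : 0 ≤ d)
    (hdb : d < |b|) : IsDigitExpansion b (d + b * q) (d :: L) := by
  obtain ⟨hdig, hne, hlast, rfl⟩ := hL
  refine ⟨List.forall_mem_cons.2 ⟨⟨hd, by omega⟩, hdig⟩, List.cons_ne_nil _ _, ?_, rfl⟩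
  obtain ⟨y, M, rfl⟩ := List.exists_cons_of_ne_nil hne
  simpa using hlast

theorem eq_zero_or_eq_one (h : IsDigitExpansion (-2) a L) : ∀ d ∈ L, d = 0 ∨ d = 1 := by
  intro d hd
  have := h.1 d hd
  norm_num at this
  omega

theorem exists_length_eq_and_bounds_of_pos (h : IsDigitExpansion (-2) a L) (ha : 0 < a) :
    ∃ m, L.length = 2 * m + 1 ∧ 4 ^ m + 2 ≤ 3 * a ∧ 3 * a ≤ 5 * 4 ^ m - 1 := by
  have h01 := h.eq_zero_or_eq_one
  obtain ⟨-, hne, hlast, rfl⟩ := h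
  obtain ⟨P, x, rfl⟩ := L.eq_nil_or_concat'.resolve_left hne
  have hx : x = 1 := (h01 x (by simp)).resolve_left (by simpa using hlast)
  obtain ⟨lo, hi⟩ := baseVal_neg_two_bounds fun d hd ↦ h01 d (List.mem_append_left _ hd)
  rw [baseVal_append_singleton, hx, one_mul] at ha ⊢
  rw [pow_succ] at lo hi
  obtain ⟨m, hm | hm⟩ := Nat.even_or_odd' P.length
  · have h₁ : (-2 : ℤ) ^ P.length = 4 ^ m := by rw [hm, pow_mul]; norm_num
    have h₂ : (2 : ℤ) ^ P.length = 4 ^ m := by rw [hm, pow_mul]; norm_num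
    rw [h₁]
    rw [h₂] at lo hi
    exact ⟨m, by simp [hm], by linarith, by linarith⟩
  · have h₁ : (-2 : ℤ) ^ P.length = -(2 * 4 ^ m) := by rw [hm, pow_succ, pow_mul]; ring
    have h₂ : (2 : ℤ) ^ P.length = 2 * 4 ^ m := by rw [hm, pow_succ, pow_mul]; ring
    rw [h₁] at ha
    rw [h₂] at hi
    linarith

theorem length_lt_of_four_le (h : IsDigitExpansion (-2) a L) (ha : 4 ≤ a) : (L.length : ℤ) < a := by
  obtain ⟨m, hlen, lo, hi⟩ := h.exists_length_eq_and_bounds_of_pos (by omega)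
  rw [hlen]
  rcases Nat.lt_or_ge m 2 with hm | hm
  · interval_cases m <;> norm_num at hi ⊢ <;> omega
  · have : 6 * (m : ℤ) + 1 < 4 ^ m := by
      clear hlen lo hi
      induction m, hm using Nat.le_induction with
      | base => norm_num
      | succ k hk ih => push_cast; rw [pow_succ]; linarith
    push_cast
    omega

end IsDigitExpansion

theorem exists_isDigitExpansion_of_le_neg_two {b : ℤ} (hb : b ≤ -2) {a : ℤ} (ha : a ≠ 0) :
    ∃ L, IsDigitExpansion b a L := by
  have hdiv : a % b + b * (a / b) = a := Int.emod_add_mul_ediv a b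
  have hr0 : 0 ≤ a % b := Int.emod_nonneg a (by omega)
  have hrb : a % b < |b| := Int.emod_lt_abs a (by omega)
  by_cases hq : a / b = 0
  · rw [hq, mul_zero, add_zero] at hdiv
    exact ⟨[a], IsDigitExpansion.singleton (by omega) (hdiv ▸ hrb)⟩
  · obtain ⟨L, hL⟩ := exists_isDigitExpansion_of_le_neg_two hb hq
    exact ⟨_, hdiv ▸ hL.cons hr0 hrb⟩
-- `a ↦ a / b` shrinks `|a|` except for `-1 ↦ 1`, hence the tie-break on the sign.
termination_by 2 * a.natAbs + if a < 0 then 1 else 0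
decreasing_by
  rw [abs_of_neg (by omega)] at hrb
  generalize a % b = r at *
  generalize a / b = q at *
  rcases lt_or_gt_of_ne hq with hq | hq
  · have : -(b * q) ≤ 2 * q := by nlinarith
    split_ifs <;> omega
  · have : 2 * (q - 1) ≤ -(b * q) + b := by
      nlinarith [mul_nonneg (by omega : 0 ≤ -b - 2) (by omega : 0 ≤ q - 1)]
    split_ifs <;> omega

namespace IsPowSumFun

variable {e : ℕ} {S : ℤ → ℤ}

theorem nonneg {b : ℤ} (hS : IsPowSumFun e b S) (hb : b ≤ -2) (a : ℤ) : 0 ≤ S a := by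
  rcases eq_or_ne a 0 with rfl | ha
  · exact hS.1.ge
  obtain ⟨L, hL⟩ := exists_isDigitExpansion_of_le_neg_two hb ha
  rw [hS.2 a L hL]
  exact List.sum_nonneg fun y hy ↦ by
    obtain ⟨d, hd, rfl⟩ := List.mem_map.1 hy
    exact pow_nonneg (hL.1 d hd).1 e

theorem apply_lt_self_of_four_le (hS : IsPowSumFun e (-2) S) {a : ℤ} (ha : 4 ≤ a) : S a < a := by
  obtain ⟨L, hL⟩ := exists_isDigitExpansion_of_le_neg_two le_rfl (show a ≠ 0 by omega)
  have hle := List.sum_le_card_nsmul (L.map (· ^ e)) 1 fun y hy ↦ by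
    obtain ⟨d, hd, rfl⟩ := List.mem_map.1 hy
    rcases hL.eq_zero_or_eq_one d hd with rfl | rfl
    exacts [zero_pow_le_one e, (one_pow e).le]
  rw [List.length_map, nsmul_one] at hle
  rw [hS.2 a L hL]
  exact hle.trans_lt (hL.length_lt_of_four_le ha)

theorem apply_eq_self_of_le_three (hS : IsPowSumFun e (-2) S) (he : e ≠ 0) {a : ℤ} (ha : 0 < a)
    (ha3 : a ≤ 3) : S a = a := by
  interval_cases a
  · rw [hS.2 1 [1] ⟨by simp, by simp, by simp, by simp [baseVal]⟩]; simp
  · rw [hS.2 2 [0, 1, 1] ⟨by simp, by simp, by simp, by simp [baseVal]⟩]; simp [he]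
  · rw [hS.2 3 [1, 1, 1] ⟨by simp, by simp, by simp, by simp [baseVal]⟩]; simp

theorem apply_le_self (hS : IsPowSumFun e (-2) S) (he : e ≠ 0) {a : ℤ} (ha : 0 ≤ a) : S a ≤ a := by
  rcases ha.eq_or_lt with rfl | ha
  · exact hS.1.le
  rcases le_or_gt 4 a with h4 | h3
  · exact (hS.apply_lt_self_of_four_le h4).le
  · exact (hS.apply_eq_self_of_le_three he ha (by omega)).le

theorem apply_eq_self_iff (hS : IsPowSumFun e (-2) S) (he : e ≠ 0) {a : ℤ} (ha : 0 < a) :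
    S a = a ↔ a ≤ 3 := by
  refine ⟨fun hfix ↦ ?_, hS.apply_eq_self_of_le_three he ha⟩
  by_contra! h4
  exact (hS.apply_lt_self_of_four_le h4).ne hfix

end IsPowSumFun

namespace Function

variable {α : Type*} {f : α → α} {s : Set α}

theorem iterate_le_self_of_mapsTo [Preorder α] (hf : Set.MapsTo f s s)
    (hle : ∀ x ∈ s, f x ≤ x) (n : ℕ) {x : α} (hx : x ∈ s) : f^[n] x ≤ x := by
  induction n with
  | zero => exact le_rfl
  | succ n ih => rw [iterate_succ_apply']; exact (hle _ (hf.iterate n hx)).trans ih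

theorem IsPeriodicPt.isFixedPt_of_apply_le [PartialOrder α] (hf : Set.MapsTo f s s)
    (hle : ∀ x ∈ s, f x ≤ x) {n : ℕ} (hn : 0 < n) {x : α} (hx : x ∈ s)
    (hper : IsPeriodicPt f n x) : IsFixedPt f x := by
  obtain ⟨n, rfl⟩ := Nat.exists_eq_add_one_of_ne_zero hn.ne'
  have hx_le : x ≤ f x := by
    calc x = f^[n] (f x) := hper.eq.symm
      _ ≤ f x := iterate_le_self_of_mapsTo hf hle n (hf hx)
  exact (hle x hx).antisymm hx_le

end Function

theorem fixed_points_base_neg_two (S : ℤ → ℤ) (hS : IsPowSumFun 2 (-2) S) :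
    (∀ a : ℤ, 0 < a → (S a = a ↔ a = 1 ∨ a = 2 ∨ a = 3)) ∧
      (∀ a : ℤ, 0 < a → ∀ m : ℕ, 1 ≤ m → S^[m] a = a → S a = a) := by
  refine ⟨fun a ha ↦ ?_, fun a ha m hm hper ↦ ?_⟩
  · rw [hS.apply_eq_self_iff two_ne_zero ha]
    omega
  · exact Function.IsPeriodicPt.isFixedPt_of_apply_le (s := Set.Ici 0)
      (fun x _ ↦ hS.nonneg le_rfl x) (fun _ ↦ hS.apply_le_self two_ne_zero) hm ha.le hper
end

section
/- The only positive fixed point of S_{2,-4} is 1, and the only cycle of length greater than 1 is (6, 14): S_{2,-4}(6)=14 and S_{2,-4}(14)=6. -/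
/-! Writing `a = d - 4q` with `d = a % 4` a digit, `S a = d² + S q`, and `|q| ≤ (|a| + 3) / 4`.
Hence `2 S a ≤ |a| + 31` for every integer `a` (by induction, with the values `|a| ≤ 24` checked
directly), so `S a < a` once `a > 31`, while `S` never takes negative values. Every positive
orbit therefore enters `[0, 31]`, where one computes that it reaches `{0, 1, 6, 14}`; this set is
closed under `S`, and a periodic point reaching it must already lie in it. -/

open Function Set

theorem IsDigitExpansion.cons_s9 {b q d : ℤ} {L : List ℤ} (hd : 0 ≤ d ∧ d ≤ |b| - 1)
    (hL : IsDigitExpansion b q L) : IsDigitExpansion b (d + b * q) (d :: L) := by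
  obtain ⟨hdigits, hne, hlast, rfl⟩ := hL
  refine ⟨?_, List.cons_ne_nil _ _, ?_, rfl⟩
  · intro x hx
    rcases List.mem_cons.1 hx with rfl | hx
    exacts [hd, hdigits x hx]
  · obtain ⟨c, L, rfl⟩ := List.exists_cons_of_ne_nil hne
    simpa [List.getLast?_cons] using hlast

theorem isDigitExpansion_singleton {b d : ℤ} (hd : 0 < d ∧ d ≤ |b| - 1) :
    IsDigitExpansion b d [d] :=
  ⟨by simpa using And.intro hd.1.le hd.2, List.cons_ne_nil _ _, by simpa using hd.1.ne',
    by simp [baseVal]⟩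

theorem exists_isDigitExpansion_neg_four {a : ℤ} (ha : a ≠ 0) :
    ∃ L, IsDigitExpansion (-4) a L := by
  induction h : (5 * a - 1).natAbs using Nat.strong_induction_on generalizing a with
  | _ n ih =>
  obtain ⟨d, q, hd, rfl⟩ : ∃ d q : ℤ, (0 ≤ d ∧ d ≤ 3) ∧ a = d + -4 * q :=
    ⟨a % 4, -(a / 4), by omega, by omega⟩
  have hd' : 0 ≤ d ∧ d ≤ |(-4 : ℤ)| - 1 := by norm_num; exact hd
  rcases eq_or_ne q 0 with rfl | hq
  · exact ⟨[d], by simpa using isDigitExpansion_singleton ⟨by omega, hd'.2⟩⟩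
  · obtain ⟨L, hL⟩ := ih _ (by omega) hq rfl
    exact ⟨_, hL.cons_s9 hd'⟩

theorem IsPowSumFun.apply_add_neg_four_mul {e : ℕ} {S : ℤ → ℤ} (hS : IsPowSumFun e (-4) S)
    (he : e ≠ 0) {d : ℤ} (hd : 0 ≤ d ∧ d ≤ 3) (q : ℤ) : S (d + -4 * q) = d ^ e + S q := by
  have hd' : 0 ≤ d ∧ d ≤ |(-4 : ℤ)| - 1 := by norm_num; exact hd
  rcases eq_or_ne q 0 with rfl | hq
  · rcases eq_or_ne d 0 with rfl | hd0
    · simp [hS.1, zero_pow he]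
    · simpa [hS.1] using hS.2 d [d] (isDigitExpansion_singleton ⟨by omega, hd'.2⟩)
  · obtain ⟨L, hL⟩ := exists_isDigitExpansion_neg_four hq
    rw [hS.2 _ _ (hL.cons_s9 hd'), hS.2 q L hL]
    simp

theorem IsPowSumFun.apply_eq_emod_add {e : ℕ} {S : ℤ → ℤ} (hS : IsPowSumFun e (-4) S)
    (he : e ≠ 0) (a : ℤ) : S a = (a % 4) ^ e + S (-(a / 4)) := by
  rw [← hS.apply_add_neg_four_mul he (by omega)]
  congr 1
  omega

/-- The fuel `|5a - 1|` strictly decreases along `a ↦ -(a / 4)` until `0` is reached. -/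
def negFourDigitPowSum (e : ℕ) (a : ℤ) : ℤ :=
  go (5 * a - 1).natAbs a
where
  go : ℕ → ℤ → ℤ
    | 0, _ => 0
    | n + 1, a => if a = 0 then 0 else (a % 4) ^ e + go n (-(a / 4))

theorem IsPowSumFun.eq_negFourDigitPowSum {e : ℕ} {S : ℤ → ℤ} (hS : IsPowSumFun e (-4) S)
    (he : e ≠ 0) : S = negFourDigitPowSum e := by
  suffices ∀ n a, (5 * a - 1).natAbs ≤ n → S a = negFourDigitPowSum.go e n a from
    funext fun a => this _ a le_rfl
  intro n
  induction n with
  | zero => intro a h; omega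
  | succ n ih =>
    intro a h
    rw [negFourDigitPowSum.go]
    split_ifs with ha
    · rw [ha, hS.1]
    · rw [hS.apply_eq_emod_add he, ih _ (by omega)]

theorem negFourDigitPowSum_nonneg (e : ℕ) (a : ℤ) : 0 ≤ negFourDigitPowSum e a := by
  suffices ∀ n a, 0 ≤ negFourDigitPowSum.go e n a from this _ a
  intro n
  induction n with
  | zero => intro a; rfl
  | succ n ih =>
    intro a
    rw [negFourDigitPowSum.go]
    split_ifs
    · rfl
    · have := ih (-(a / 4))
      have : 0 ≤ a % 4 := by omega
      positivity

theorem Function.IsPeriodicPt.mem_of_iterate_mem {α : Type*} {f : α → α} {s : Set α}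
    {m j : ℕ} {x : α} (hx : IsPeriodicPt f m x) (hm : 0 < m) (hs : MapsTo f s s)
    (hj : f^[j] x ∈ s) : x ∈ s := by
  rw [← (hx.mul_const j).eq, ← Nat.sub_add_cancel (Nat.le_mul_of_pos_left j hm),
    iterate_add_apply]
  exact hs.iterate _ hj

namespace IsPowSumFun

variable {S : ℤ → ℤ} (hS : IsPowSumFun 2 (-4) S)
include hS

theorem nonneg_s9 (a : ℤ) : 0 ≤ S a :=
  hS.eq_negFourDigitPowSum two_ne_zero ▸ negFourDigitPowSum_nonneg 2 a

-- `31` is the maximum of `2 S a - |a|`, attained at `a = 7`.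
theorem two_mul_le_abs_add (a : ℤ) : 2 * S a ≤ |a| + 31 := by
  induction h : a.natAbs using Nat.strong_induction_on generalizing a with
  | _ n ih =>
  rcases le_or_gt a.natAbs 24 with hsmall | hbig
  · have hcheck : ∀ k : ℕ, k < 49 → 2 * negFourDigitPowSum 2 (k - 24) ≤ |(k : ℤ) - 24| + 31 := by
      decide
    have := hcheck (a + 24).toNat (by omega)
    rwa [show ((a + 24).toNat : ℤ) - 24 = a by omega, ← hS.eq_negFourDigitPowSum two_ne_zero]
      at this
  · have hq := ih _ (by omega) (-(a / 4)) rfl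
    have hd : (a % 4) ^ 2 ≤ 9 := by
      nlinarith [Int.emod_nonneg a (by norm_num : (4 : ℤ) ≠ 0),
        Int.emod_lt_of_pos a (by norm_num : (0 : ℤ) < 4)]
    rw [hS.apply_eq_emod_add two_ne_zero]
    rw [Int.abs_eq_natAbs] at hq ⊢
    omega

theorem lt_self {a : ℤ} (ha : 31 < a) : S a < a := by
  linarith [hS.two_mul_le_abs_add a, abs_of_pos (show 0 < a by omega)]

theorem exists_iterate_mem {a : ℤ} (ha : 0 ≤ a) : ∃ j, S^[j] a ∈ ({0, 1, 6, 14} : Set ℤ) := by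
  induction h : a.toNat using Nat.strong_induction_on generalizing a with
  | _ n ih =>
  rcases le_or_gt a 31 with hsmall | hbig
  · have hcheck : ∀ k : ℕ, k < 32 →
        ∃ j, j < 8 ∧ (negFourDigitPowSum 2)^[j] k ∈ ({0, 1, 6, 14} : Set ℤ) := by
      decide
    obtain ⟨j, -, hj⟩ := hcheck a.toNat (by omega)
    rw [Int.toNat_of_nonneg ha, ← hS.eq_negFourDigitPowSum two_ne_zero] at hj
    exact ⟨j, hj⟩
  · obtain ⟨j, hj⟩ := ih _ (by have := hS.lt_self hbig; omega) (hS.nonneg_s9 a) rfl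
    exact ⟨j + 1, hj⟩

theorem apply_one_six_fourteen : S 1 = 1 ∧ S 6 = 14 ∧ S 14 = 6 := by
  rw [hS.eq_negFourDigitPowSum two_ne_zero]
  decide

theorem mapsTo : MapsTo S {0, 1, 6, 14} {0, 1, 6, 14} := by
  obtain ⟨h1, h6, h14⟩ := hS.apply_one_six_fourteen
  rintro x (rfl | rfl | rfl | rfl) <;> simp [hS.1, h1, h6, h14]

theorem mem_of_isPeriodicPt {a : ℤ} (ha : 0 ≤ a) {m : ℕ} (hm : 0 < m)
    (hper : IsPeriodicPt S m a) : a ∈ ({0, 1, 6, 14} : Set ℤ) :=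
  have ⟨_, hj⟩ := hS.exists_iterate_mem ha
  hper.mem_of_iterate_mem hm hS.mapsTo hj

end IsPowSumFun

theorem cycles_base_neg_four (S : ℤ → ℤ) (hS : IsPowSumFun 2 (-4) S) :
    (∀ a : ℤ, 0 < a → (S a = a ↔ a = 1)) ∧
      S 6 = 14 ∧ S 14 = 6 ∧
      (∀ a : ℤ, 0 < a → ∀ m : ℕ, 1 ≤ m → S^[m] a = a →
        a = 1 ∨ a = 6 ∨ a = 14) := by
  obtain ⟨h1, h6, h14⟩ := hS.apply_one_six_fourteen
  have hcycle : ∀ a : ℤ, 0 < a → ∀ m : ℕ, 1 ≤ m → S^[m] a = a → a = 1 ∨ a = 6 ∨ a = 14 := by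
    intro a ha m hm hper
    have := hS.mem_of_isPeriodicPt ha.le hm hper
    simp only [mem_insert_iff, mem_singleton_iff] at this
    omega
  refine ⟨fun a ha => ⟨fun hfix => ?_, fun ha1 => ha1 ▸ h1⟩, h6, h14, hcycle⟩
  rcases hcycle a ha 1 le_rfl hfix with rfl | rfl | rfl <;> omega
end

section
/- A positive integer a is −2-happy (i.e., S_{2,-2}^k(a) = 1 for some k ≥ 1) if and only if a ≡ 1 (mod 3). -/
/-!
Base `-2` digits are `0` or `1`, so `S_{2,-2}(a)` is the digit sum of `a`. Since `-2 ≡ 1 (mod 3)`,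
the digit sum is congruent to `a` modulo `3`, so every iterate stays in the residue class of `a`
and only `a ≡ 1` can reach `1`. Conversely, grouping the digits in pairs writes `a ≥ 0` as
`d₀ - 2 d₁ + 4 r` with `r ≥ 0`, which gives `S(a) ≤ a`, strictly once `a ≥ 4`; so the orbit of a
positive `a ≡ 1 (mod 3)` decreases until it reaches the only such value below `4`, namely `1`.
-/

theorem baseVal_modEq_sum (b : ℤ) : ∀ L : List ℤ, baseVal b L ≡ L.sum [ZMOD 1 - b]
  | [] => Int.ModEq.refl 0
  | d :: L => by
    have hb : b ≡ 1 [ZMOD 1 - b] := Int.modEq_iff_dvd.mpr dvd_rfl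
    simpa only [baseVal, List.sum_cons, one_mul] using
      (Int.ModEq.refl d).add (hb.mul (baseVal_modEq_sum b L))

theorem sum_le_baseVal_neg_two :
    ∀ {L : List ℤ}, (∀ d ∈ L, 0 ≤ d ∧ d ≤ 1) → 0 ≤ baseVal (-2) L →
      L.sum ≤ baseVal (-2) L
  | [], _, _ => le_rfl
  | [d], _, _ => by simp [baseVal]
  | d₀ :: d₁ :: L, hL, h => by
    have h₀ := hL d₀ (by simp)
    have h₁ := hL d₁ (by simp)
    simp only [baseVal, List.sum_cons] at h ⊢
    have := sum_le_baseVal_neg_two (L := L) (fun d hd => hL d (by simp [hd])) (by omega)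
    omega

theorem sum_lt_baseVal_neg_two {L : List ℤ} (hL : ∀ d ∈ L, 0 ≤ d ∧ d ≤ 1)
    (h : 4 ≤ baseVal (-2) L) : L.sum < baseVal (-2) L := by
  match L, hL, h with
  | [], _, h => simp [baseVal] at h
  | [d], hL, h =>
    have := hL d (by simp)
    simp only [baseVal] at h
    omega
  | d₀ :: d₁ :: L, hL, h =>
    have h₀ := hL d₀ (by simp)
    have h₁ := hL d₁ (by simp)
    simp only [baseVal, List.sum_cons] at h ⊢
    have := sum_le_baseVal_neg_two (L := L) (fun d hd => hL d (by simp [hd])) (by omega)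
    omega

theorem isDigitExpansion_neg_two_one : IsDigitExpansion (-2) 1 [1] := by
  simp [IsDigitExpansion, baseVal]

theorem exists_isDigitExpansion_neg_two (a : ℤ) (ha : a ≠ 0) :
    ∃ L, IsDigitExpansion (-2) a L := by
  by_cases hq : (a % 2 - a) / 2 = 0
  · obtain rfl : a = 1 := by omega
    exact ⟨[1], isDigitExpansion_neg_two_one⟩
  · obtain ⟨L, hdig, hne, hlast, hval⟩ := exists_isDigitExpansion_neg_two _ hq
    refine ⟨a % 2 :: L, ?_, List.cons_ne_nil _ _, ?_, ?_⟩
    · simp only [List.mem_cons, forall_eq_or_imp]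
      exact ⟨by rw [abs_neg, abs_two]; omega, hdig⟩
    · cases L with
      | nil => exact absurd rfl hne
      | cons d L => simpa [List.getLast!_cons_eq_getLastD] using hlast
    · rw [baseVal, hval]; omega
termination_by 2 * a.natAbs + if a < 0 then 1 else 0
decreasing_by split_ifs <;> omega

namespace IsDigitExpansion

variable {a : ℤ} {L : List ℤ}

theorem zero_le_and_le_one (hL : IsDigitExpansion (-2) a L) : ∀ d ∈ L, 0 ≤ d ∧ d ≤ 1 := by
  simpa using hL.1

end IsDigitExpansion

namespace IsPowSumFun

variable {S : ℤ → ℤ}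

theorem apply_eq_sum (hS : IsPowSumFun 2 (-2) S) {a : ℤ} {L : List ℤ}
    (hL : IsDigitExpansion (-2) a L) : S a = L.sum := by
  rw [hS.2 a L hL]
  congr 1
  refine (List.map_congr_left fun d hd => ?_).trans L.map_id
  obtain ⟨h₀, h₁⟩ := hL.zero_le_and_le_one d hd
  interval_cases d <;> rfl

theorem apply_modEq (hS : IsPowSumFun 2 (-2) S) (a : ℤ) : S a ≡ a [ZMOD 3] := by
  obtain rfl | ha := eq_or_ne a 0
  · rw [hS.1]
  obtain ⟨L, hL⟩ := exists_isDigitExpansion_neg_two a ha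
  rw [hS.apply_eq_sum hL, ← hL.2.2.2]
  exact (baseVal_modEq_sum (-2) L).symm

theorem iterate_modEq (hS : IsPowSumFun 2 (-2) S) (a : ℤ) :
    ∀ k : ℕ, S^[k] a ≡ a [ZMOD 3]
  | 0 => rfl
  | k + 1 => by
    rw [Function.iterate_succ_apply']
    exact (hS.apply_modEq _).trans (hS.iterate_modEq a k)

theorem apply_nonneg (hS : IsPowSumFun 2 (-2) S) (a : ℤ) : 0 ≤ S a := by
  obtain rfl | ha := eq_or_ne a 0
  · rw [hS.1]
  obtain ⟨L, hL⟩ := exists_isDigitExpansion_neg_two a ha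
  rw [hS.apply_eq_sum hL]
  exact List.sum_nonneg fun d hd => (hL.zero_le_and_le_one d hd).1

theorem apply_lt_self (hS : IsPowSumFun 2 (-2) S) {a : ℤ} (ha : 4 ≤ a) : S a < a := by
  obtain ⟨L, hL⟩ := exists_isDigitExpansion_neg_two a (by omega)
  rw [hS.apply_eq_sum hL, ← hL.2.2.2]
  exact sum_lt_baseVal_neg_two hL.zero_le_and_le_one (hL.2.2.2 ▸ ha)

theorem apply_one (hS : IsPowSumFun 2 (-2) S) : S 1 = 1 :=
  hS.apply_eq_sum isDigitExpansion_neg_two_one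

theorem exists_iterate_eq_one (hS : IsPowSumFun 2 (-2) S) {a : ℤ} (ha : 0 < a)
    (h : a ≡ 1 [ZMOD 3]) : ∃ k : ℕ, 1 ≤ k ∧ S^[k] a = 1 := by
  obtain rfl | ha₁ := eq_or_ne a 1
  · exact ⟨1, le_rfl, hS.apply_one⟩
  have h₄ : 4 ≤ a := by rw [Int.ModEq] at h; omega
  have hSa : S a ≡ 1 [ZMOD 3] := (hS.apply_modEq a).trans h
  have hpos : 0 < S a := by
    have := hS.apply_nonneg a
    rw [Int.ModEq] at hSa
    omega
  obtain ⟨k, -, hk⟩ := hS.exists_iterate_eq_one hpos hSa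
  exact ⟨k + 1, by omega, by rwa [Function.iterate_succ_apply]⟩
termination_by a.toNat
decreasing_by have := hS.apply_lt_self h₄; omega

end IsPowSumFun

theorem neg_two_happy_iff (S : ℤ → ℤ) (hS : IsPowSumFun 2 (-2) S)
    (a : ℤ) (ha : 0 < a) :
    (∃ k : ℕ, 1 ≤ k ∧ S^[k] a = 1) ↔ a ≡ 1 [ZMOD 3] := by
  refine ⟨fun ⟨k, _, hk⟩ => ?_, hS.exists_iterate_eq_one ha⟩
  exact hk ▸ (hS.iterate_modEq a k).symm
end

section
/- A positive integer a is −3-happy (i.e., S_{2,-3}^k(a) = 1 for some k ≥ 1) if and only if a is odd. -/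
lemma getLast!_cons' (d : ℤ) (M : List ℤ) (h : M ≠ []) : (d :: M).getLast! = M.getLast! := by
  cases M with
  | nil => simp at h
  | cons e N => simp [List.getLast!, List.getLast?_cons_cons]

lemma parity_list : ∀ L : List ℤ, ∃ c : ℤ, (L.map (· ^ 2)).sum - baseVal (-3) L = 2 * c := by
  intro L; induction L with
  | nil => exact ⟨0, by simp [baseVal]⟩
  | cons d M ih =>
    obtain ⟨c, hc⟩ := ih
    obtain ⟨e, he⟩ := Int.even_mul_succ_self (d - 1)
    refine ⟨e + c + 2 * baseVal (-3) M, ?_⟩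
    have hb : baseVal (-3) (d :: M) = d + (-3) * baseVal (-3) M := rfl
    simp only [List.map_cons, List.sum_cons, hb]
    nlinarith [he, hc]

lemma sumsq_nonneg (L : List ℤ) : 0 ≤ (L.map (· ^ 2)).sum := by
  apply List.sum_nonneg
  intro x hx
  simp only [List.mem_map] at hx
  obtain ⟨d, _, rfl⟩ := hx
  positivity

lemma sumsq_le : ∀ L : List ℤ, (∀ d ∈ L, 0 ≤ d ∧ d ≤ 2) →
    (L.map (· ^ 2)).sum ≤ 4 * (L.length : ℤ) := by
  intro L; induction L with
  | nil => simp
  | cons d M ih =>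
    intro h
    have hd := h d (by simp)
    have hM := ih (fun x hx => h x (by simp [hx]))
    simp only [List.map_cons, List.sum_cons, List.length_cons]
    push_cast
    have hsq : d ^ 2 ≤ 4 := by nlinarith [hd.1, hd.2]
    linarith

lemma tri : ∀ L : List ℤ, (∀ d ∈ L, 0 ≤ d ∧ d ≤ 2) → L ≠ [] → L.getLast! ≠ 0 →
    (0 < baseVal (-3) L ∧ 3 ^ (L.length - 1) + 3 ≤ 4 * baseVal (-3) L) ∨
    (baseVal (-3) L < 0 ∧ 3 ^ (L.length - 1) + 1 ≤ -(4 * baseVal (-3) L)) := by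
  intro L; induction L with
  | nil => intro _ h; exact absurd rfl h
  | cons d M ih =>
    intro hdig _ hlast
    have hd := hdig d (by simp)
    cases M with
    | nil =>
      have hg : ([d] : List ℤ).getLast! = d := by simp [List.getLast!]
      rw [hg] at hlast
      left
      have hb : baseVal (-3) [d] = d := by simp [baseVal]
      rw [hb]
      constructor
      · omega
      · simp; omega
    | cons e N =>
      have hne : (e :: N) ≠ [] := by simp
      rw [getLast!_cons' d _ hne] at hlast
      have IH := ih (fun x hx => hdig x (by simp [hx])) hne hlast
      have hpow : (3:ℤ) ^ ((d :: e :: N).length - 1) = 3 * 3 ^ ((e :: N).length - 1) := by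
        have h1 : (d :: e :: N).length - 1 = ((e :: N).length - 1) + 1 := by simp
        rw [h1, pow_succ]; ring
      have hb : baseVal (-3) (d :: e :: N) = d + (-3) * baseVal (-3) (e :: N) := rfl
      rcases IH with ⟨hw, hlb⟩ | ⟨hw, hlb⟩
      · right
        rw [hb, hpow]
        constructor
        · linarith
        · linarith
      · left
        rw [hb, hpow]
        constructor
        · linarith
        · linarith

lemma exists_exp : ∀ n : ℕ, ∀ a : ℤ, a.natAbs ≤ n → a ≠ 0 →
    ∃ L, IsDigitExpansion (-3) a L := by
  intro n; induction n with
  | zero => intro a h h0; exfalso; omega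
  | succ n ih =>
    intro a hn h0
    by_cases h1 : a = -1
    · subst h1; exact ⟨[2, 1], by unfold IsDigitExpansion; decide⟩
    by_cases hr : -(a / 3) = 0
    · refine ⟨[a % 3], ?_, by simp, ?_, ?_⟩
      · simp only [List.mem_singleton]
        rintro x rfl
        rw [show |(-3:ℤ)| = 3 by norm_num]
        omega
      · have hg : ([a % 3] : List ℤ).getLast! = a % 3 := by simp [List.getLast!]
        rw [hg]; omega
      · show a % 3 + (-3) * baseVal (-3) [] = a
        simp [baseVal]; omega
    · have hlt : (-(a / 3)).natAbs ≤ n := by omega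
      obtain ⟨M, hM1, hM2, hM3, hM4⟩ := ih (-(a / 3)) hlt hr
      refine ⟨a % 3 :: M, ?_, by simp, ?_, ?_⟩
      · intro x hx
        rcases List.mem_cons.1 hx with rfl | hx
        · rw [show |(-3:ℤ)| = 3 by norm_num]; omega
        · exact hM1 x hx
      · rw [getLast!_cons' _ _ hM2]; exact hM3
      · show a % 3 + (-3) * baseVal (-3) M = a
        rw [hM4]; omega

lemma pow16 : ∀ j : ℕ, 16 * ((j : ℤ) + 5) < 3 ^ (j + 4) + 3 := by
  intro j; induction j with
  | zero => norm_num
  | succ j ih =>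
    have h81 : (81:ℤ) ≤ 3 ^ (j + 4) := by
      calc (81:ℤ) = 3 ^ 4 := by norm_num
        _ ≤ 3 ^ (j + 4) := pow_le_pow_right₀ (by norm_num) (by omega)
    have h3 : (3:ℤ) ^ (j + 1 + 4) = 3 * 3 ^ (j + 4) := by rw [pow_succ]; ring
    push_cast
    rw [h3]
    push_cast at ih
    linarith

theorem neg_three_happy_iff (S : ℤ → ℤ) (hS : IsPowSumFun 2 (-3) S)
    (a : ℤ) (ha : 0 < a) :
    (∃ k : ℕ, 1 ≤ k ∧ S^[k] a = 1) ↔ Odd a := by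
  obtain ⟨hS0, hSdig⟩ := hS
  have hpar : ∀ x : ℤ, x ≠ 0 → ∃ c : ℤ, S x - x = 2 * c := by
    intro x hx
    obtain ⟨L, hL⟩ := exists_exp x.natAbs x le_rfl hx
    obtain ⟨c, hc⟩ := parity_list L
    have hv := hL.2.2.2
    rw [hSdig x L hL]
    exact ⟨c, by omega⟩
  have hEven : ∀ x : ℤ, Even x → Even (S x) := by
    intro x hx
    rcases eq_or_ne x 0 with rfl | hx0
    · rw [hS0]; exact Even.zero
    · obtain ⟨c, hc⟩ := hpar x hx0
      rw [Int.even_iff] at hx ⊢; omega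
  have hOdd : ∀ x : ℤ, Odd x → Odd (S x) := by
    intro x hx
    rw [Int.odd_iff] at hx ⊢
    obtain ⟨c, hc⟩ := hpar x (by omega)
    omega
  have hpos : ∀ x : ℤ, x ≠ 0 → 0 ≤ S x := by
    intro x hx
    obtain ⟨L, hL⟩ := exists_exp x.natAbs x le_rfl hx
    rw [hSdig x L hL]
    exact sumsq_nonneg L
  have hdesc : ∀ x : ℤ, 21 ≤ x → S x < x := by
    intro x hx
    obtain ⟨L, hL⟩ := exists_exp x.natAbs x le_rfl (by omega)
    obtain ⟨h1, h2, h3, h4⟩ := hL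
    have hdig : ∀ d ∈ L, 0 ≤ d ∧ d ≤ 2 := by
      intro d hd
      have := h1 d hd
      rw [show |(-3:ℤ)| = 3 by norm_num] at this
      omega
    rw [hSdig x L ⟨h1, h2, h3, h4⟩]
    have hs := sumsq_le L hdig
    rcases tri L hdig h2 h3 with ⟨hp, hb⟩ | ⟨hn, _⟩
    · rw [h4] at hp hb
      by_cases hlen : L.length ≤ 5
      · have h20 : (4:ℤ) * L.length ≤ 20 := by
          have : (L.length : ℤ) ≤ 5 := by exact_mod_cast hlen
          linarith
        linarith
      · obtain ⟨j, hj⟩ : ∃ j, L.length = j + 5 := ⟨L.length - 5, by omega⟩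
        have h16 := pow16 j
        have hjl : L.length - 1 = j + 4 := by omega
        rw [hjl] at hb
        have hcast : (L.length : ℤ) = (j : ℤ) + 5 := by exact_mod_cast congrArg Nat.cast hj
        rw [hcast] at hs
        linarith
    · rw [h4] at hn; omega
  -- small values of S
  have e1 : S 1 = 1 := by
    rw [hSdig 1 [1] (by unfold IsDigitExpansion; decide)]; decide
  have e3 : S 3 = 5 := by
    rw [hSdig 3 [0,2,1] (by unfold IsDigitExpansion; decide)]; decide
  have e5 : S 5 = 9 := by
    rw [hSdig 5 [2,2,1] (by unfold IsDigitExpansion; decide)]; decide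
  have e7 : S 7 = 3 := by
    rw [hSdig 7 [1,1,1] (by unfold IsDigitExpansion; decide)]; decide
  have e9 : S 9 = 1 := by
    rw [hSdig 9 [0,0,1] (by unfold IsDigitExpansion; decide)]; decide
  have e11 : S 11 = 5 := by
    rw [hSdig 11 [2,0,1] (by unfold IsDigitExpansion; decide)]; decide
  have e13 : S 13 = 9 := by
    rw [hSdig 13 [1,2,2] (by unfold IsDigitExpansion; decide)]; decide
  have e15 : S 15 = 5 := by
    rw [hSdig 15 [0,1,2] (by unfold IsDigitExpansion; decide)]; decide
  have e17 : S 17 = 9 := by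
    rw [hSdig 17 [2,1,2] (by unfold IsDigitExpansion; decide)]; decide
  have e19 : S 19 = 5 := by
    rw [hSdig 19 [1,0,2] (by unfold IsDigitExpansion; decide)]; decide
  have reach : ∀ n : ℕ, ∀ x : ℤ, x.natAbs ≤ n → 0 < x → Odd x →
      ∃ k : ℕ, 1 ≤ k ∧ S^[k] x = 1 := by
    intro n; induction n with
    | zero => intro x h h0 _; exfalso; omega
    | succ n ih =>
      intro x hn h0 hodd
      rw [Int.odd_iff] at hodd
      by_cases hx : x < 21
      · interval_cases x
        · exact ⟨1, le_refl 1, by show S 1 = 1; exact e1⟩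
        · exact absurd hodd (by decide)
        · exact ⟨3, by norm_num, by show S (S (S 3)) = 1; rw [e3, e5, e9]⟩
        · exact absurd hodd (by decide)
        · exact ⟨2, by norm_num, by show S (S 5) = 1; rw [e5, e9]⟩
        · exact absurd hodd (by decide)
        · exact ⟨4, by norm_num, by show S (S (S (S 7))) = 1; rw [e7, e3, e5, e9]⟩
        · exact absurd hodd (by decide)
        · exact ⟨1, le_refl 1, by show S 9 = 1; exact e9⟩
        · exact absurd hodd (by decide)
        · exact ⟨3, by norm_num, by show S (S (S 11)) = 1; rw [e11, e5, e9]⟩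
        · exact absurd hodd (by decide)
        · exact ⟨2, by norm_num, by show S (S 13) = 1; rw [e13, e9]⟩
        · exact absurd hodd (by decide)
        · exact ⟨3, by norm_num, by show S (S (S 15)) = 1; rw [e15, e5, e9]⟩
        · exact absurd hodd (by decide)
        · exact ⟨2, by norm_num, by show S (S 17) = 1; rw [e17, e9]⟩
        · exact absurd hodd (by decide)
        · exact ⟨3, by norm_num, by show S (S (S 19)) = 1; rw [e19, e5, e9]⟩
        · exact absurd hodd (by decide)
      · have h21 : 21 ≤ x := by omega
        have hd1 : S x < x := hdesc x h21
        have hd2 : Odd (S x) := hOdd x (by rw [Int.odd_iff]; exact hodd)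
        have hd3 : 0 ≤ S x := hpos x (by omega)
        have hd4 : 0 < S x := by
          rcases hd3.lt_or_eq with h | h
          · exact h
          · exfalso; rw [Int.odd_iff] at hd2; omega
        have hd5 : (S x).natAbs ≤ n := by omega
        obtain ⟨k, hk1, hk2⟩ := ih (S x) hd5 hd4 hd2
        exact ⟨k + 1, by omega, by rw [Function.iterate_succ_apply]; exact hk2⟩
  constructor
  · rintro ⟨k, hk1, hk2⟩
    by_contra hodd
    rw [Int.not_odd_iff_even] at hodd
    have hev : ∀ m : ℕ, Even (S^[m] a) := by
      intro m; induction m with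
      | zero => simpa using hodd
      | succ m ihm => rw [Function.iterate_succ_apply']; exact hEven _ ihm
    have := hev k
    rw [hk2, Int.even_iff] at this
    omega
  · intro hodd
    exact reach a.natAbs a le_rfl ha hodd
end
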